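/- Let p be a prime and λ the Haar probability measure on K = SL(2, ℤ_p). For n ∈ ℤ define F_n ⊆ K by: for n ≥ 0, F_n = {k : |k₁₁|_p = p^{−n}, |k₂₁|_p = 1} and F_{−n} = {k : |k₁₁|_p = 1, |k₂₁|_p = p^{−n}}. Then ⋃_{n∈ℤ} F_n has full measure and λ(F_n) = ((p−1)/(p+1)) p^{−|n|} for every n ∈ ℤ. -/

import Mathlib

open MeasureTheory

/-- The compact group `SL(2, ℤ_p)`, realized as the set of `2 × 2` matrices over `ℚ_p` with
determinant `1` and entries of norm at most `1`. -/
def SL2Zp (p : ℕ) [Fact p.Prime] : Set (Matrix (Fin 2) (Fin 2) ℚ_[p]) :=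
  {k | k.det = 1 ∧ ∀ i j, ‖k i j‖ ≤ 1}

/-- For `n ∈ ℤ`, the subset `F_n` of `SL(2, ℤ_p)`: for `n ≥ 0` it consists of the `k` with
`|k₁₁|_p = p^{−n}` and `|k₂₁|_p = 1`, and `F_{−n}` of the `k` with `|k₁₁|_p = 1` and
`|k₂₁|_p = p^{−n}`. -/
def FsetSL2 (p : ℕ) [Fact p.Prime] (n : ℤ) : Set (Matrix (Fin 2) (Fin 2) ℚ_[p]) :=
  {k ∈ SL2Zp p | ‖k 0 0‖ = (p : ℝ) ^ (-(max n 0)) ∧ ‖k 1 0‖ = (p : ℝ) ^ (min n 0)}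

/-!
For `n ≥ 0` let `Eₙ ⊆ K = SL(2, ℤ_p)` be the set where `|k₁₁| ≤ p⁻ⁿ` and `|k₂₁| = 1`, and `Dₙ` the
set where `|k₁₁| = 1` and `|k₂₁| ≤ p⁻ⁿ`, so that `F_n = Eₙ \ Eₙ₊₁` and `F_{-n} = Dₙ \ Dₙ₊₁`.
Left multiplication by `!![0, -1; 1, 0]` carries `Dₙ` onto `Eₙ`, and the transvections
`!![1, j pⁿ; 0, 1]`, `0 ≤ j < p`, carry `Eₙ₊₁` onto the `p` pieces of the partition of `Eₙ`
according to the coefficient of `pⁿ` in the `p`-adic expansion of `k₁₁ / k₂₁`. By invariance,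
`μ(Dₙ) = μ(Eₙ) = p⁻ⁿ μ(E₀)`. The first column of `k ∈ K` is a unit vector, so `K = E₀ ∪ D₀` with
`E₀ ∩ D₀ = F₀ = E₀ \ E₁`, and inclusion–exclusion gives `1 = 2 μ(E₀) - (1 - p⁻¹) μ(E₀)`, i.e.
`μ(E₀) = p / (p + 1)`. Finally `K \ ⋃ F_n` is where `k₁₁ = 0` or `k₂₁ = 0`; such `k` lie in every
`Eₙ`, resp. every `Dₙ`, so this set is null.
-/

open Filter Topology

namespace Padic

variable {p : ℕ} [Fact p.Prime]

theorem norm_eq_zpow_iff (x : ℚ_[p]) (m : ℤ) :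
    ‖x‖ = (p : ℝ) ^ m ↔ ‖x‖ ≤ (p : ℝ) ^ m ∧ ¬‖x‖ ≤ (p : ℝ) ^ (m - 1) := by
  rw [← norm_lt_pow_iff_norm_le_pow_sub_one, not_lt, le_antisymm_iff]

theorem existsUnique_nat_lt_norm_sub_lt_one {y : ℚ_[p]} (hy : ‖y‖ ≤ 1) :
    ∃! j : ℕ, j < p ∧ ‖y - j‖ < 1 := by
  have h := PadicInt.existsUnique_mem_range ⟨y, hy⟩
  simp only [IsLocalRing.mem_maximalIdeal, PadicInt.mem_nonunits, PadicInt.norm_def] at h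
  exact h

theorem existsUnique_digit {a b : ℚ_[p]} (hb : ‖b‖ = 1) {n : ℕ}
    (ha : ‖a‖ ≤ (p : ℝ) ^ (-(n : ℤ))) :
    ∃! j : ℕ, j < p ∧ ‖a - j * p ^ n * b‖ ≤ (p : ℝ) ^ (-((n + 1 : ℕ) : ℤ)) := by
  have hp : (0 : ℝ) < p := mod_cast (Fact.out : p.Prime).pos
  have hc : ‖(p : ℚ_[p]) ^ n * b‖ = (p : ℝ) ^ (-(n : ℤ)) := by
    rw [norm_mul, norm_p_pow, hb, mul_one]
  have hc0 : (p : ℚ_[p]) ^ n * b ≠ 0 := norm_pos_iff.1 (hc ▸ zpow_pos hp _)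
  set y := a / ((p : ℚ_[p]) ^ n * b)
  have hy : ‖y‖ ≤ 1 := by
    rwa [norm_div, hc, div_le_one (zpow_pos hp _)]
  refine (existsUnique_congr fun j => and_congr_right fun _ => ?_).1
    (existsUnique_nat_lt_norm_sub_lt_one hy)
  have hsplit : a - j * p ^ n * b = (y - j) * ((p : ℚ_[p]) ^ n * b) := by
    rw [sub_mul, div_mul_cancel₀ _ hc0]; ring
  have hscale : (p : ℝ) ^ (-((n + 1 : ℕ) : ℤ)) = (p : ℝ) ^ (-1 : ℤ) * (p : ℝ) ^ (-(n : ℤ)) := by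
    rw [← zpow_add₀ hp.ne']; push_cast; ring_nf
  rw [hsplit, norm_mul, hc, hscale, mul_le_mul_iff_left₀ (zpow_pos hp _),
    norm_le_pow_iff_norm_lt_pow_add_one, neg_add_cancel, zpow_zero]

theorem norm_le_of_norm_sub_digit_le {a b : ℚ_[p]} (hb : ‖b‖ ≤ 1) {n j : ℕ}
    (h : ‖a - j * p ^ n * b‖ ≤ (p : ℝ) ^ (-((n + 1 : ℕ) : ℤ))) :
    ‖a‖ ≤ (p : ℝ) ^ (-(n : ℤ)) := by
  have hp : (1 : ℝ) < p := mod_cast (Fact.out : p.Prime).one_lt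
  have hdigit : ‖(j : ℚ_[p]) * p ^ n * b‖ ≤ (p : ℝ) ^ (-(n : ℤ)) := by
    rw [norm_mul, norm_mul, norm_p_pow]
    calc ‖(j : ℚ_[p])‖ * (p : ℝ) ^ (-(n : ℤ)) * ‖b‖ ≤ 1 * (p : ℝ) ^ (-(n : ℤ)) * 1 := by
          gcongr
          exact IsUltrametricDist.norm_natCast_le_one ℚ_[p] j
      _ = (p : ℝ) ^ (-(n : ℤ)) := by ring
  calc ‖a‖ = ‖(a - j * p ^ n * b) + j * p ^ n * b‖ := by rw [sub_add_cancel]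
    _ ≤ max ‖a - j * p ^ n * b‖ ‖(j : ℚ_[p]) * p ^ n * b‖ := IsUltrametricDist.norm_add_le_max _ _
    _ ≤ (p : ℝ) ^ (-(n : ℤ)) :=
      max_le (h.trans (zpow_le_zpow_right₀ hp.le (by omega))) hdigit

end Padic

theorem MeasureTheory.measure_eq_zero_of_forall_subset_of_tendsto {α : Type*} [MeasurableSpace α]
    {μ : Measure α} {s : Set α} {t : ℕ → Set α} (hst : ∀ n, s ⊆ t n)
    (ht : Tendsto (fun n => μ (t n)) atTop (𝓝 0)) : μ s = 0 :=
  nonpos_iff_eq_zero.1 (ge_of_tendsto' ht fun n => measure_mono (hst n))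

namespace SL2Zp

variable {p : ℕ} [Fact p.Prime]

theorem isClosed : IsClosed (SL2Zp p) := by
  simp only [SL2Zp, Set.ofPred_and, Set.ofPred_forall]
  exact (isClosed_eq (by fun_prop) continuous_const).inter <|
    isClosed_iInter fun _ => isClosed_iInter fun _ => isClosed_le (by fun_prop) continuous_const

theorem mul_mem {a b : Matrix (Fin 2) (Fin 2) ℚ_[p]} (ha : a ∈ SL2Zp p) (hb : b ∈ SL2Zp p) :
    a * b ∈ SL2Zp p := by
  refine ⟨by rw [Matrix.det_mul, ha.1, hb.1, one_mul], fun i j => ?_⟩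
  rw [Matrix.mul_apply]
  refine IsUltrametricDist.norm_sum_le_of_forall_le_of_nonneg zero_le_one fun l _ => ?_
  rw [norm_mul]
  exact mul_le_one₀ (ha.2 i l) (norm_nonneg _) (hb.2 l j)

theorem adjugate_mem {k : Matrix (Fin 2) (Fin 2) ℚ_[p]} (hk : k ∈ SL2Zp p) :
    k.adjugate ∈ SL2Zp p := by
  refine ⟨by rw [Matrix.det_adjugate, hk.1, one_pow], fun i j => ?_⟩
  rw [Matrix.adjugate_fin_two]
  fin_cases i <;> fin_cases j <;> simpa using hk.2 _ _

theorem mul_mem_iff {k₀ k : Matrix (Fin 2) (Fin 2) ℚ_[p]} (hk₀ : k₀ ∈ SL2Zp p) :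
    k₀ * k ∈ SL2Zp p ↔ k ∈ SL2Zp p := by
  refine ⟨fun h => ?_, mul_mem hk₀⟩
  have hk : k₀.adjugate * (k₀ * k) = k := by
    rw [← mul_assoc, Matrix.adjugate_mul, hk₀.1, one_smul, one_mul]
  exact hk ▸ mul_mem (adjugate_mem hk₀) h

theorem transvection_mem {c : ℚ_[p]} (hc : ‖c‖ ≤ 1) :
    Matrix.transvection (0 : Fin 2) 1 c ∈ SL2Zp p := by
  refine ⟨Matrix.det_transvection_of_ne _ _ (by decide) c, fun i j => ?_⟩
  fin_cases i <;> fin_cases j <;> simp [Matrix.transvection, hc]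

theorem weyl_mem : !![0, -1; 1, 0] ∈ SL2Zp p := by
  refine ⟨by simp [Matrix.det_fin_two], fun i j => ?_⟩
  fin_cases i <;> fin_cases j <;> simp

theorem norm_eq_one_or_norm_eq_one {k : Matrix (Fin 2) (Fin 2) ℚ_[p]} (hk : k ∈ SL2Zp p) :
    ‖k 0 0‖ = 1 ∨ ‖k 1 0‖ = 1 := by
  have hdet : k 0 0 * k 1 1 + -(k 0 1 * k 1 0) = 1 := by
    rw [← sub_eq_add_neg, ← Matrix.det_fin_two, hk.1]
  have hmax : max ‖k 0 0‖ ‖k 1 0‖ = 1 := by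
    refine le_antisymm (max_le (hk.2 0 0) (hk.2 1 0)) ?_
    calc (1 : ℝ) = ‖k 0 0 * k 1 1 + -(k 0 1 * k 1 0)‖ := by rw [hdet, norm_one]
      _ ≤ max ‖k 0 0 * k 1 1‖ ‖-(k 0 1 * k 1 0)‖ := IsUltrametricDist.norm_add_le_max _ _
      _ ≤ max ‖k 0 0‖ ‖k 1 0‖ := by
        rw [norm_neg, norm_mul, norm_mul]
        exact max_le_max (mul_le_of_le_one_right (norm_nonneg _) (hk.2 1 1))
          (mul_le_of_le_one_left (norm_nonneg _) (hk.2 0 1))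
  rcases max_choice ‖k 0 0‖ ‖k 1 0‖ with h | h
  · exact Or.inl (h ▸ hmax)
  · exact Or.inr (h ▸ hmax)

def Eset (p : ℕ) [Fact p.Prime] (n : ℕ) : Set (Matrix (Fin 2) (Fin 2) ℚ_[p]) :=
  {k ∈ SL2Zp p | ‖k 0 0‖ ≤ (p : ℝ) ^ (-(n : ℤ)) ∧ ‖k 1 0‖ = 1}

def Dset (p : ℕ) [Fact p.Prime] (n : ℕ) : Set (Matrix (Fin 2) (Fin 2) ℚ_[p]) :=
  {k ∈ SL2Zp p | ‖k 0 0‖ = 1 ∧ ‖k 1 0‖ ≤ (p : ℝ) ^ (-(n : ℤ))}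

def Sset (p : ℕ) [Fact p.Prime] (n j : ℕ) : Set (Matrix (Fin 2) (Fin 2) ℚ_[p]) :=
  {k ∈ SL2Zp p | ‖k 0 0 - j * p ^ n * k 1 0‖ ≤ (p : ℝ) ^ (-((n + 1 : ℕ) : ℤ)) ∧ ‖k 1 0‖ = 1}

theorem isClosed_Eset (n : ℕ) : IsClosed (Eset p n) := by
  rw [Eset, ← Set.inter_ofPred_eq_sep, Set.ofPred_and]
  exact isClosed.inter <|
    (isClosed_le (by fun_prop) continuous_const).inter (isClosed_eq (by fun_prop) continuous_const)

theorem isClosed_Dset (n : ℕ) : IsClosed (Dset p n) := by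
  rw [Dset, ← Set.inter_ofPred_eq_sep, Set.ofPred_and]
  exact isClosed.inter <|
    (isClosed_eq (by fun_prop) continuous_const).inter (isClosed_le (by fun_prop) continuous_const)

theorem isClosed_Sset (n j : ℕ) : IsClosed (Sset p n j) := by
  rw [Sset, ← Set.inter_ofPred_eq_sep, Set.ofPred_and]
  exact isClosed.inter <|
    (isClosed_le (by fun_prop) continuous_const).inter (isClosed_eq (by fun_prop) continuous_const)

theorem Eset_succ_subset (n : ℕ) : Eset p (n + 1) ⊆ Eset p n := by
  have hp : (1 : ℝ) ≤ p := mod_cast (Fact.out : p.Prime).one_le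
  exact fun k ⟨hk, h00, h10⟩ => ⟨hk, h00.trans (zpow_le_zpow_right₀ hp (by omega)), h10⟩

theorem Dset_succ_subset (n : ℕ) : Dset p (n + 1) ⊆ Dset p n := by
  have hp : (1 : ℝ) ≤ p := mod_cast (Fact.out : p.Prime).one_le
  exact fun k ⟨hk, h00, h10⟩ => ⟨hk, h00, h10.trans (zpow_le_zpow_right₀ hp (by omega))⟩

theorem FsetSL2_natCast (m : ℕ) : FsetSL2 p m = Eset p m \ Eset p (m + 1) := by
  ext k
  simp only [FsetSL2, Eset, Set.mem_sdiff, Set.mem_ofPred_eq, max_eq_left (Int.natCast_nonneg m),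
    min_eq_right (Int.natCast_nonneg m), zpow_zero, Padic.norm_eq_zpow_iff, Nat.cast_succ,
    neg_add, ← sub_eq_add_neg]
  tauto

theorem FsetSL2_neg_natCast (m : ℕ) : FsetSL2 p (-m) = Dset p m \ Dset p (m + 1) := by
  ext k
  have hm : -(m : ℤ) ≤ 0 := by omega
  simp only [FsetSL2, Dset, Set.mem_sdiff, Set.mem_ofPred_eq, max_eq_right hm, min_eq_left hm,
    neg_zero, zpow_zero, Padic.norm_eq_zpow_iff, Nat.cast_succ, neg_add, ← sub_eq_add_neg]
  tauto

theorem Eset_eq_biUnion_Sset (n : ℕ) : Eset p n = ⋃ j ∈ Finset.range p, Sset p n j := by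
  ext k
  simp only [Set.mem_iUnion, Finset.mem_range, exists_prop]
  constructor
  · rintro ⟨hk, h00, h10⟩
    obtain ⟨j, ⟨hj, hjk⟩, -⟩ := Padic.existsUnique_digit h10 h00
    exact ⟨j, hj, hk, hjk, h10⟩
  · rintro ⟨j, -, hk, hjk, h10⟩
    exact ⟨hk, Padic.norm_le_of_norm_sub_digit_le h10.le hjk, h10⟩

theorem pairwiseDisjoint_Sset (n : ℕ) :
    (Finset.range p : Set ℕ).PairwiseDisjoint (Sset p n) := by
  refine fun i hi j hj hij => Set.disjoint_left.2 fun k ⟨hk, hik, h10⟩ ⟨_, hjk, _⟩ => hij ?_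
  have h00 : ‖k 0 0‖ ≤ (p : ℝ) ^ (-(n : ℤ)) := Padic.norm_le_of_norm_sub_digit_le h10.le hik
  exact (Padic.existsUnique_digit h10 h00).unique ⟨Finset.mem_range.1 hi, hik⟩
    ⟨Finset.mem_range.1 hj, hjk⟩

theorem transvection_digit_mem (n j : ℕ) :
    Matrix.transvection (0 : Fin 2) 1 ((j : ℚ_[p]) * p ^ n) ∈ SL2Zp p :=
  transvection_mem (mod_cast IsUltrametricDist.norm_natCast_le_one ℚ_[p] (j * p ^ n))

theorem preimage_transvection_mul_Sset (n j : ℕ) :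
    (Matrix.transvection (0 : Fin 2) 1 ((j : ℚ_[p]) * p ^ n) * ·) ⁻¹' Sset p n j =
      Eset p (n + 1) := by
  ext k
  simp [Sset, Eset, mul_mem_iff (transvection_digit_mem n j),
    Matrix.transvection_mul_apply_same, mul_assoc]

theorem preimage_weyl_mul_Eset (n : ℕ) :
    ((!![0, -1; 1, 0] : Matrix (Fin 2) (Fin 2) ℚ_[p]) * ·) ⁻¹' Eset p n = Dset p n := by
  ext k
  have h00 : ((!![0, -1; 1, 0] : Matrix (Fin 2) (Fin 2) ℚ_[p]) * k) 0 0 = -k 1 0 := by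
    simp [Matrix.mul_apply]
  have h10 : ((!![0, -1; 1, 0] : Matrix (Fin 2) (Fin 2) ℚ_[p]) * k) 1 0 = k 0 0 := by
    simp [Matrix.mul_apply]
  simp only [Set.mem_preimage, Eset, Dset, Set.mem_ofPred_eq, mul_mem_iff weyl_mem,
    h00, h10, norm_neg]
  tauto

theorem subset_Eset_zero_union_Dset_zero : SL2Zp p ⊆ Eset p 0 ∪ Dset p 0 := by
  intro k hk
  rcases norm_eq_one_or_norm_eq_one hk with h | h
  · exact Or.inr ⟨hk, h, by simpa using hk.2 1 0⟩
  · exact Or.inl ⟨hk, by simpa using hk.2 0 0, h⟩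

theorem Eset_zero_inter_Dset_zero : Eset p 0 ∩ Dset p 0 = FsetSL2 p 0 := by
  ext k
  simp only [Eset, Dset, FsetSL2, Set.mem_inter_iff, Set.mem_ofPred_eq, max_self, min_self,
    neg_zero, zpow_zero, Nat.cast_zero]
  constructor
  · rintro ⟨⟨hk, -, h10⟩, -, h00, -⟩
    exact ⟨hk, h00, h10⟩
  · rintro ⟨hk, h00, h10⟩
    exact ⟨⟨hk, h00.le, h10⟩, hk, h00, h10.le⟩

theorem mem_iUnion_FsetSL2 {k : Matrix (Fin 2) (Fin 2) ℚ_[p]} (hk : k ∈ SL2Zp p)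
    (h00 : k 0 0 ≠ 0) (h10 : k 1 0 ≠ 0) : k ∈ ⋃ n : ℤ, FsetSL2 p n := by
  have hp : (1 : ℝ) < p := mod_cast (Fact.out : p.Prime).one_lt
  have hv00 := (Padic.norm_le_one_iff_val_nonneg _).1 (hk.2 0 0)
  have hv10 := (Padic.norm_le_one_iff_val_nonneg _).1 (hk.2 1 0)
  have hunit : (k 0 0).valuation = 0 ∨ (k 1 0).valuation = 0 := by
    have h := norm_eq_one_or_norm_eq_one hk
    rwa [Padic.norm_eq_zpow_neg_valuation h00, Padic.norm_eq_zpow_neg_valuation h10,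
      zpow_eq_one_iff_right₀ (by positivity) hp.ne', zpow_eq_one_iff_right₀ (by positivity) hp.ne',
      neg_eq_zero, neg_eq_zero] at h
  refine Set.mem_iUnion.2 ⟨(k 0 0).valuation - (k 1 0).valuation, hk, ?_, ?_⟩
  · rw [Padic.norm_eq_zpow_neg_valuation h00]; congr 2; omega
  · rw [Padic.norm_eq_zpow_neg_valuation h10]; congr 1; omega

theorem sep_apply_zero_zero_eq_zero_subset_Eset (n : ℕ) :
    {k ∈ SL2Zp p | k 0 0 = 0} ⊆ Eset p n := by
  rintro k ⟨hk, h00⟩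
  have h10 := (norm_eq_one_or_norm_eq_one hk).resolve_left (by simp [h00])
  exact ⟨hk, by rw [h00, norm_zero]; positivity, h10⟩

theorem sep_apply_one_zero_eq_zero_subset_Dset (n : ℕ) :
    {k ∈ SL2Zp p | k 1 0 = 0} ⊆ Dset p n := by
  rintro k ⟨hk, h10⟩
  have h00 := (norm_eq_one_or_norm_eq_one hk).resolve_right (by simp [h10])
  exact ⟨hk, h00, by rw [h10, norm_zero]; positivity⟩

section Measure

variable [MeasurableSpace (Matrix (Fin 2) (Fin 2) ℚ_[p])]
  [BorelSpace (Matrix (Fin 2) (Fin 2) ℚ_[p])] {μ : Measure (Matrix (Fin 2) (Fin 2) ℚ_[p])}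

theorem measurePreserving_mul_left (hinv : ∀ k₀ ∈ SL2Zp p, μ.map (k₀ * ·) = μ)
    {k₀ : Matrix (Fin 2) (Fin 2) ℚ_[p]} (hk₀ : k₀ ∈ SL2Zp p) : MeasurePreserving (k₀ * ·) μ μ :=
  ⟨(continuous_const_mul k₀).measurable, hinv k₀ hk₀⟩

theorem measure_Eset_eq_mul_succ (hinv : ∀ k₀ ∈ SL2Zp p, μ.map (k₀ * ·) = μ) (n : ℕ) :
    μ (Eset p n) = p * μ (Eset p (n + 1)) := by
  rw [Eset_eq_biUnion_Sset, measure_biUnion_finset (pairwiseDisjoint_Sset n)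
    fun j _ => (isClosed_Sset n j).measurableSet]
  have hS : ∀ j : ℕ, μ (Sset p n j) = μ (Eset p (n + 1)) := fun j => by
    rw [← preimage_transvection_mul_Sset,
      (measurePreserving_mul_left hinv (transvection_digit_mem n j)).measure_preimage
        (isClosed_Sset n j).measurableSet.nullMeasurableSet]
  simp [hS]

theorem measure_Dset (hinv : ∀ k₀ ∈ SL2Zp p, μ.map (k₀ * ·) = μ) (n : ℕ) :
    μ (Dset p n) = μ (Eset p n) := by
  rw [← preimage_weyl_mul_Eset, (measurePreserving_mul_left hinv weyl_mem).measure_preimage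
    (isClosed_Eset n).measurableSet.nullMeasurableSet]

theorem measureReal_Dset (hinv : ∀ k₀ ∈ SL2Zp p, μ.map (k₀ * ·) = μ) (n : ℕ) :
    μ.real (Dset p n) = μ.real (Eset p n) := by
  rw [Measure.real, measure_Dset hinv, ← Measure.real]

theorem measureReal_Eset (hinv : ∀ k₀ ∈ SL2Zp p, μ.map (k₀ * ·) = μ) (n : ℕ) :
    μ.real (Eset p n) = μ.real (Eset p 0) * (p : ℝ)⁻¹ ^ n := by
  induction n with
  | zero => simp
  | succ n ih =>
    have hp : (p : ℝ) ≠ 0 := mod_cast (Fact.out : p.Prime).ne_zero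
    have h : μ.real (Eset p n) = p * μ.real (Eset p (n + 1)) := by
      simp [Measure.real, measure_Eset_eq_mul_succ hinv n]
    rw [pow_succ, ← mul_assoc, ← ih, h]
    field_simp

theorem tendsto_measure_Eset [IsFiniteMeasure μ] (hinv : ∀ k₀ ∈ SL2Zp p, μ.map (k₀ * ·) = μ) :
    Tendsto (fun n => μ (Eset p n)) atTop (𝓝 0) := by
  have hp : (p : ℝ)⁻¹ < 1 := inv_lt_one_of_one_lt₀ (mod_cast (Fact.out : p.Prime).one_lt)
  have h := ENNReal.tendsto_ofReal
    ((tendsto_pow_atTop_nhds_zero_of_lt_one (by positivity) hp).const_mul (μ.real (Eset p 0)))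
  rw [mul_zero, ENNReal.ofReal_zero] at h
  refine h.congr fun n => ?_
  rw [← measureReal_Eset hinv, ofReal_measureReal]

theorem tendsto_measure_Dset [IsFiniteMeasure μ] (hinv : ∀ k₀ ∈ SL2Zp p, μ.map (k₀ * ·) = μ) :
    Tendsto (fun n => μ (Dset p n)) atTop (𝓝 0) :=
  (tendsto_measure_Eset hinv).congr fun n => (measure_Dset hinv n).symm

theorem measureReal_Eset_zero [IsProbabilityMeasure μ] (hsupp : μ (SL2Zp p)ᶜ = 0)
    (hinv : ∀ k₀ ∈ SL2Zp p, μ.map (k₀ * ·) = μ) :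
    μ.real (Eset p 0) = p / (p + 1) := by
  have hp : (p : ℝ) ≠ 0 := mod_cast (Fact.out : p.Prime).ne_zero
  have hunion : μ.real (Eset p 0 ∪ Dset p 0) = 1 := by
    have hnull : μ (Eset p 0 ∪ Dset p 0)ᶜ = 0 :=
      measure_mono_null (Set.compl_subset_compl.2 subset_Eset_zero_union_Dset_zero) hsupp
    rw [measureReal_congr (ae_eq_univ.2 hnull), probReal_univ]
  have hinter : μ.real (Eset p 0 ∩ Dset p 0) = μ.real (Eset p 0) * (1 - (p : ℝ)⁻¹) := by
    rw [Eset_zero_inter_Dset_zero, show FsetSL2 p 0 = _ from FsetSL2_natCast 0,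
      measureReal_sdiff (Eset_succ_subset 0) (isClosed_Eset 1).measurableSet,
      measureReal_Eset hinv 1]
    ring
  have h := measureReal_union_add_inter (μ := μ) (s := Eset p 0) (isClosed_Dset 0).measurableSet
  rw [hunion, hinter, measureReal_Dset hinv] at h
  field_simp at h ⊢
  linarith

theorem measureReal_FsetSL2 [IsProbabilityMeasure μ] (hsupp : μ (SL2Zp p)ᶜ = 0)
    (hinv : ∀ k₀ ∈ SL2Zp p, μ.map (k₀ * ·) = μ) (n : ℤ) :
    μ.real (FsetSL2 p n) = ((p : ℝ) - 1) / ((p : ℝ) + 1) * (p : ℝ) ^ (-|n|) := by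
  have hp : (p : ℝ) ≠ 0 := mod_cast (Fact.out : p.Prime).ne_zero
  have hdiff (m : ℕ) : μ.real (Eset p m) - μ.real (Eset p (m + 1)) =
      ((p : ℝ) - 1) / ((p : ℝ) + 1) * (p : ℝ) ^ (-|(m : ℤ)|) := by
    rw [measureReal_Eset hinv m, measureReal_Eset hinv (m + 1), measureReal_Eset_zero hsupp hinv,
      abs_of_nonneg (Int.natCast_nonneg m), zpow_neg, zpow_natCast, ← inv_pow, pow_succ]
    field_simp
  obtain ⟨m, rfl | rfl⟩ := n.eq_nat_or_neg
  · rw [FsetSL2_natCast, measureReal_sdiff (Eset_succ_subset m) (isClosed_Eset _).measurableSet,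
      hdiff]
  · rw [FsetSL2_neg_natCast, measureReal_sdiff (Dset_succ_subset m) (isClosed_Dset _).measurableSet,
      measureReal_Dset hinv, measureReal_Dset hinv, abs_neg, hdiff]

end Measure

end SL2Zp

/-- The sets `F_n`, `n ∈ ℤ`, cover `SL(2, ℤ_p)` up to a null set for the Haar probability
measure `λ` of `SL(2, ℤ_p)`, and `λ(F_n) = ((p−1)/(p+1)) p^{−|n|}` for every `n ∈ ℤ`. -/
theorem haar_measure_Fn {p : ℕ} [Fact p.Prime]
    [MeasurableSpace (Matrix (Fin 2) (Fin 2) ℚ_[p])]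
    [BorelSpace (Matrix (Fin 2) (Fin 2) ℚ_[p])]
    (μ : Measure (Matrix (Fin 2) (Fin 2) ℚ_[p])) [IsProbabilityMeasure μ]
    (hsupp : μ (SL2Zp p)ᶜ = 0)
    (hinv : ∀ k₀ ∈ SL2Zp p, Measure.map (fun x => k₀ * x) μ = μ) :
    μ (⋃ n : ℤ, FsetSL2 p n) = 1 ∧
      ∀ n : ℤ, μ (FsetSL2 p n) =
        ENNReal.ofReal ((((p : ℝ) - 1) / ((p : ℝ) + 1)) * (p : ℝ) ^ (-|n|)) := by
  refine ⟨?_, fun n => by rw [← SL2Zp.measureReal_FsetSL2 hsupp hinv n, ofReal_measureReal]⟩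
  have h00 : μ {k ∈ SL2Zp p | k 0 0 = 0} = 0 :=
    measure_eq_zero_of_forall_subset_of_tendsto SL2Zp.sep_apply_zero_zero_eq_zero_subset_Eset
      (SL2Zp.tendsto_measure_Eset hinv)
  have h10 : μ {k ∈ SL2Zp p | k 1 0 = 0} = 0 :=
    measure_eq_zero_of_forall_subset_of_tendsto SL2Zp.sep_apply_one_zero_eq_zero_subset_Dset
      (SL2Zp.tendsto_measure_Dset hinv)
  have hae : ∀ᵐ k ∂μ, k ∈ ⋃ n : ℤ, FsetSL2 p n := by
    filter_upwards [mem_ae_iff.2 hsupp, compl_mem_ae_iff.2 h00, compl_mem_ae_iff.2 h10]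
      with k hk hk00 hk10
    exact SL2Zp.mem_iUnion_FsetSL2 hk (fun h => hk00 ⟨hk, h⟩) (fun h => hk10 ⟨hk, h⟩)
  exact (measure_congr (ae_eq_univ.2 (mem_ae_iff.1 hae))).trans measure_univ
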